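/- arXiv:math/0703127 — 2 statements merged into one kernel-verified Lean document; each statement's English description precedes it below -/
import Mathlib

section
/- Let f be a transcendental entire function in the class Δ, and suppose there are constants M₀ > 0, C₁ > 1, C₂ > 1 such that log M(C₁ r, f) ≥ C₂ log M(r,f) for every r ≥ M₀. Then there exist constants M₁ > M₀ and h > 1 such that for every r > M₁ there is some r′ ∈ (r, r^h) with m(r′,f) > M(r,f)^h. -/
/-!
If the exceptional set `E(f)` has upper logarithmic density `< θ < 1`, then for `h > 2 / (1 - θ)`
and large `r` it cannot fill `(r², r^h)`: that interval has logarithmic length `(h - 2) log r`,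
more than the `θ h log r` that `E(f)` covers in `(1, r^h)`. At a point `x` of the interval outside
`E(f)`, `log m(x,f) > ε₂ log M(x,f)`, while iterating the growth hypothesis `N` times gives
`log M(x,f) ≥ log M(C₁ᴺ r, f) ≥ C₂ᴺ log M(r,f)`; taking `C₂ᴺ > h / ε₂` yields `m(x,f) > M(r,f)^h`.
-/

open Filter MeasureTheory

/-- The maximum modulus `M(r,f) = max_{|z|=r} |f z|`. -/
noncomputable def maxMod (f : ℂ → ℂ) (r : ℝ) : ℝ :=
  sSup ((fun z => ‖f z‖) '' Metric.sphere (0 : ℂ) r)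

/-- The minimum modulus `m(r,f) = min_{|z|=r} |f z|`. -/
noncomputable def minMod (f : ℂ → ℂ) (r : ℝ) : ℝ :=
  sInf ((fun z => ‖f z‖) '' Metric.sphere (0 : ℂ) r)

/-- The upper logarithmic density of a set `E ⊆ (1,∞)`:
`limsup_{R→∞} (1/log R) ∫_{E∩(1,R)} dt/t`. -/
noncomputable def upperLogDens (E : Set ℝ) : ℝ :=
  Filter.limsup (fun R : ℝ => (Real.log R)⁻¹ * ∫ t in E ∩ Set.Ioo 1 R, t⁻¹) Filter.atTop

/-- `f` is a transcendental entire function: entire and not a polynomial. -/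
def TranscendentalEntire (f : ℂ → ℂ) : Prop :=
  Differentiable ℂ f ∧ ¬ ∃ p : Polynomial ℂ, ∀ z, f z = p.eval z

/-- The order `λ(f) = limsup_{r→∞} log log M(r,f) / log r`, as an extended real. -/
noncomputable def eOrder (f : ℂ → ℂ) : EReal :=
  Filter.limsup
    (fun r : ℝ => ((Real.log (Real.log (maxMod f r)) / Real.log r : ℝ) : EReal))
    Filter.atTop

/-- The lower order `ρ(f) = liminf_{r→∞} log log M(r,f) / log r`, as an extended real. -/
noncomputable def eLowerOrder (f : ℂ → ℂ) : EReal :=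
  Filter.liminf
    (fun r : ℝ => ((Real.log (Real.log (maxMod f r)) / Real.log r : ℝ) : EReal))
    Filter.atTop

open Set

lemma minMod_nonneg (f : ℂ → ℂ) (r : ℝ) : 0 ≤ minMod f r :=
  Real.sInf_nonneg (by rintro _ ⟨z, _, rfl⟩; positivity)

section Modulus

variable {f : ℂ → ℂ}

lemma norm_le_maxMod (hf : Continuous f) {r : ℝ} {z : ℂ} (hz : z ∈ Metric.sphere (0 : ℂ) r) :
    ‖f z‖ ≤ maxMod f r :=
  le_csSup ((isCompact_sphere 0 r).image (continuous_norm.comp hf)).bddAbove ⟨z, hz, rfl⟩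

lemma maxMod_mono (hf : Differentiable ℂ f) {r₁ r₂ : ℝ} (h0 : 0 ≤ r₁) (h12 : r₁ ≤ r₂) :
    maxMod f r₁ ≤ maxMod f r₂ := by
  rcases (h0.trans h12).eq_or_lt with h2 | h2
  · rw [le_antisymm h12 (h2 ▸ h0)]
  refine csSup_le ((NormedSpace.sphere_nonempty.2 h0).image _) ?_
  rintro _ ⟨z, hz, rfl⟩
  have hz_closure : z ∈ closure (Metric.ball (0 : ℂ) r₂) := by
    rw [closure_ball 0 h2.ne', mem_closedBall_zero_iff, mem_sphere_zero_iff_norm.1 hz]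
    exact h12
  refine Complex.norm_le_of_forall_mem_frontier_norm_le Metric.isBounded_ball hf.diffContOnCl
    (fun w hw => ?_) hz_closure
  rw [frontier_ball 0 h2.ne'] at hw
  exact norm_le_maxMod hf.continuous hw

lemma eventually_one_lt_maxMod (hf : Differentiable ℂ f) (hnc : ¬ ∃ c, ∀ z, f z = c) :
    ∀ᶠ r in atTop, 1 < maxMod f r := by
  by_contra hfreq
  simp only [not_eventually, not_lt, frequently_atTop] at hfreq
  refine hnc (hf.exists_const_forall_eq_of_bounded (isBounded_iff_forall_norm_le.2 ⟨1, ?_⟩))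
  rintro _ ⟨z, rfl⟩
  obtain ⟨r, hzr, hr⟩ := hfreq ‖z‖
  calc ‖f z‖ ≤ maxMod f ‖z‖ := norm_le_maxMod hf.continuous (by simp)
    _ ≤ maxMod f r := maxMod_mono hf (norm_nonneg z) hzr
    _ ≤ 1 := hr

end Modulus

lemma pow_mul_le_apply_pow_mul {L : ℝ → ℝ} {M₀ C₁ C₂ r : ℝ} (hC₁ : 1 ≤ C₁) (hC₂ : 0 ≤ C₂)
    (hgrow : ∀ r ≥ M₀, C₂ * L r ≤ L (C₁ * r)) (hr₀ : 0 ≤ r) (hr : M₀ ≤ r) (n : ℕ) :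
    C₂ ^ n * L r ≤ L (C₁ ^ n * r) := by
  induction n with
  | zero => simp
  | succ n ih =>
    have hle : M₀ ≤ C₁ ^ n * r := hr.trans (le_mul_of_one_le_left hr₀ (one_le_pow₀ hC₁))
    calc C₂ ^ (n + 1) * L r = C₂ * (C₂ ^ n * L r) := by ring
      _ ≤ C₂ * L (C₁ ^ n * r) := mul_le_mul_of_nonneg_left ih hC₂
      _ ≤ L (C₁ * (C₁ ^ n * r)) := hgrow _ hle
      _ = L (C₁ ^ (n + 1) * r) := by ring_nf

lemma eventually_mul_log_maxMod_le {f : ℂ → ℂ} (hf : Differentiable ℂ f)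
    (hM : ∀ᶠ r in atTop, 1 < maxMod f r) {M₀ C₁ C₂ : ℝ} (hC₁ : 1 ≤ C₁) (hC₂ : 1 < C₂)
    (hgrow : ∀ r ≥ M₀, Real.log (maxMod f (C₁ * r)) ≥ C₂ * Real.log (maxMod f r)) (K : ℝ) :
    ∀ᶠ r in atTop, ∀ x ≥ r ^ 2, K * Real.log (maxMod f r) ≤ Real.log (maxMod f x) := by
  obtain ⟨N, hN⟩ := pow_unbounded_of_one_lt K hC₂
  filter_upwards [hM, eventually_ge_atTop M₀, eventually_ge_atTop (C₁ ^ N), eventually_ge_atTop 0]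
    with r hMr hrM₀ hrC hr₀ x hx
  have hrCN : r ≤ C₁ ^ N * r := le_mul_of_one_le_left hr₀ (one_le_pow₀ hC₁)
  have hCNx : C₁ ^ N * r ≤ x := by nlinarith
  calc K * Real.log (maxMod f r) ≤ C₂ ^ N * Real.log (maxMod f r) :=
        mul_le_mul_of_nonneg_right hN.le (Real.log_nonneg hMr.le)
    _ ≤ Real.log (maxMod f (C₁ ^ N * r)) :=
        pow_mul_le_apply_pow_mul hC₁ (by linarith) hgrow hr₀ hrM₀ N
    _ ≤ Real.log (maxMod f x) :=
        Real.log_le_log (by linarith [maxMod_mono hf hr₀ hrCN])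
          (maxMod_mono hf (by positivity) hCNx)

section LogDensity

lemma integrableOn_inv_Ioo {a b : ℝ} (ha : 0 < a) :
    IntegrableOn (fun t : ℝ => t⁻¹) (Ioo a b) := by
  rcases le_total a b with hab | hba
  · refine (intervalIntegral.intervalIntegrable_inv (fun t ht => ?_) continuousOn_id).1.mono_set
      Ioo_subset_Ioc_self
    rw [uIcc_of_le hab] at ht
    exact (ha.trans_le ht.1).ne'
  · simp [Ioo_eq_empty_of_le hba]

lemma integral_inv_Ioo {a b : ℝ} (ha : 0 < a) (hab : a ≤ b) :
    ∫ t in Ioo a b, t⁻¹ = Real.log b - Real.log a := by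
  rw [← integral_Ioc_eq_integral_Ioo, ← intervalIntegral.integral_of_le hab,
    integral_inv_of_pos ha (ha.trans_le hab), Real.log_div (ha.trans_le hab).ne' ha.ne']

lemma setIntegral_inv_mono_set {S T : Set ℝ} {a b : ℝ} (ha : 0 < a) (hT : T ⊆ Ioo a b)
    (hST : S ⊆ T) : ∫ t in S, t⁻¹ ≤ ∫ t in T, t⁻¹ := by
  have hnonneg : ∀ᵐ t ∂volume.restrict (Ioo a b), 0 ≤ t⁻¹ :=
    ae_restrict_of_forall_mem measurableSet_Ioo fun t ht => inv_nonneg.2 (ha.trans ht.1).le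
  exact setIntegral_mono_set ((integrableOn_inv_Ioo ha).mono_set hT)
    (ae_restrict_of_ae_restrict_of_subset hT hnonneg) hST.eventuallyLE

lemma eventually_setIntegral_inv_lt {E : Set ℝ} {θ : ℝ} (hθ : upperLogDens E < θ) :
    ∀ᶠ R in atTop, ∫ t in E ∩ Ioo 1 R, t⁻¹ < θ * Real.log R := by
  have hdens_le_one : ∀ᶠ R : ℝ in atTop, (Real.log R)⁻¹ * ∫ t in E ∩ Ioo 1 R, t⁻¹ ≤ 1 := by
    filter_upwards [eventually_gt_atTop 1] with R hR
    rw [inv_mul_le_iff₀ (Real.log_pos hR), mul_one, ← sub_zero (Real.log R), ← Real.log_one,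
      ← integral_inv_Ioo one_pos hR.le]
    exact setIntegral_inv_mono_set one_pos subset_rfl inter_subset_right
  filter_upwards [eventually_lt_of_limsup_lt hθ (isBoundedUnder_of_eventually_le hdens_le_one),
    eventually_gt_atTop 1] with R hR hR1
  rwa [inv_mul_lt_iff₀ (Real.log_pos hR1), mul_comm] at hR

lemma exists_pos_eventually_exists_notMem_Ioo {E : Set ℝ} (hE : upperLogDens E < 1) :
    ∃ c > 0, ∀ᶠ R in atTop, ∀ A ≥ 1, Real.log A < c * Real.log R → ∃ x ∈ Ioo A R, x ∉ E := by
  obtain ⟨θ, hEθ, hθ1⟩ := exists_between (max_lt hE one_pos)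
  refine ⟨1 - θ, by linarith, ?_⟩
  filter_upwards [eventually_setIntegral_inv_lt ((le_max_left _ _).trans_lt hEθ),
    eventually_gt_atTop 1] with R hR hR1 A hA hlogA
  by_contra! hsub
  have hAR : A < R := by
    rw [← Real.log_lt_log_iff (by linarith) (by linarith)]
    nlinarith [Real.log_pos hR1, (le_max_right _ _).trans_lt hEθ]
  have hlen : Real.log R - Real.log A ≤ ∫ t in E ∩ Ioo 1 R, t⁻¹ := by
    rw [← integral_inv_Ioo (by linarith) hAR.le]
    exact setIntegral_inv_mono_set one_pos inter_subset_right
      fun x hx => ⟨hsub x hx, hA.trans_lt hx.1, hx.2⟩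
  linarith

lemma exists_one_lt_eventually_exists_notMem_Ioo_sq_rpow {E : Set ℝ} (hE : upperLogDens E < 1) :
    ∃ h > (1 : ℝ), ∀ᶠ r in atTop, ∃ x ∈ Ioo (r ^ 2) (r ^ h), x ∉ E := by
  obtain ⟨c, hc, hgap⟩ := exists_pos_eventually_exists_notMem_Ioo hE
  have hc2 : 0 < 2 / c := by positivity
  refine ⟨2 / c + 1, by linarith, ?_⟩
  filter_upwards [(tendsto_rpow_atTop (by linarith : 0 < 2 / c + 1)).eventually hgap,
    eventually_gt_atTop 1] with r hgap_r hr1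
  refine hgap_r (r ^ 2) (one_le_pow₀ hr1.le) ?_
  have hch : c * (2 / c + 1) = 2 + c := by field_simp
  rw [Real.log_pow, Real.log_rpow (by linarith), ← mul_assoc, hch]
  push_cast
  linarith [mul_pos hc (Real.log_pos hr1)]

end LogDensity

lemma rpow_maxMod_lt_minMod {f : ℂ → ℂ} {ε h r x : ℝ} (hε : 0 < ε)
    (hMr : 1 < maxMod f r) (hh : 0 < h)
    (hx : ε * Real.log (maxMod f x) < Real.log (minMod f x))
    (hrx : h / ε * Real.log (maxMod f r) ≤ Real.log (maxMod f x)) :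
    maxMod f r ^ h < minMod f x := by
  have hlt : h * Real.log (maxMod f r) < Real.log (minMod f x) := by
    calc h * Real.log (maxMod f r) = ε * (h / ε * Real.log (maxMod f r)) := by field_simp
      _ ≤ ε * Real.log (maxMod f x) := mul_le_mul_of_nonneg_left hrx hε.le
      _ < Real.log (minMod f x) := hx
  have hm : 1 < minMod f x :=
    (Real.log_pos_iff (minMod_nonneg f x)).1 (by nlinarith [Real.log_pos hMr])
  exact (Real.rpow_lt_iff_lt_log (by linarith) (by linarith)).2 hlt

theorem stmt_4_general (f : ℂ → ℂ) (hf : TranscendentalEntire f)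
    (hΔ : ∃ ε₁ ∈ Set.Ioo (0:ℝ) 1, ∃ ε₂ ∈ Set.Ioo (0:ℝ) 1,
      upperLogDens
        {r : ℝ | 1 < r ∧ Real.log (minMod f r) ≤ ε₂ * Real.log (maxMod f r)} ≤ ε₁)
    (M₀ C₁ C₂ : ℝ) (hC₁ : 1 < C₁) (hC₂ : 1 < C₂)
    (hgrow : ∀ r ≥ M₀, Real.log (maxMod f (C₁ * r)) ≥ C₂ * Real.log (maxMod f r)) :
    ∃ M₁ > M₀, ∃ h > (1:ℝ), ∀ r > M₁, ∃ r' ∈ Set.Ioo r (r ^ h),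
      minMod f r' > maxMod f r ^ h := by
  obtain ⟨hdiff, hnpoly⟩ := hf
  obtain ⟨ε₁, hε₁, ε₂, hε₂, hdens⟩ := hΔ
  obtain ⟨h, hh, hgap⟩ := exists_one_lt_eventually_exists_notMem_Ioo_sq_rpow (hdens.trans_lt hε₁.2)
  have hM := eventually_one_lt_maxMod hdiff fun ⟨a, ha⟩ => hnpoly ⟨.C a, by simp [ha]⟩
  have hK := eventually_mul_log_maxMod_le hdiff hM hC₁.le hC₂ hgrow (h / ε₂)
  obtain ⟨R, hR⟩ := eventually_atTop.1 (hM.and (hgap.and (hK.and (eventually_gt_atTop 1))))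
  refine ⟨max R M₀ + 1, by linarith [le_max_right R M₀], h, hh, fun r hr => ?_⟩
  obtain ⟨hMr, ⟨x, hx, hxE⟩, hKr, hr1⟩ := hR r (by linarith [le_max_left R M₀])
  have hx_good : ε₂ * Real.log (maxMod f x) < Real.log (minMod f x) :=
    not_le.1 fun hle => hxE ⟨(one_lt_pow₀ hr1 two_ne_zero).trans hx.1, hle⟩
  exact ⟨x, ⟨(lt_self_pow₀ hr1 one_lt_two).trans hx.1, hx.2⟩,
    rpow_maxMod_lt_minMod hε₂.1 hMr (by linarith) hx_good (hKr x hx.1.le)⟩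

theorem stmt_4 (f : ℂ → ℂ) (hf : TranscendentalEntire f)
    (hΔ : ∃ ε₁ ∈ Set.Ioo (0:ℝ) 1, ∃ ε₂ ∈ Set.Ioo (0:ℝ) 1,
      upperLogDens
        {r : ℝ | 1 < r ∧ Real.log (minMod f r) ≤ ε₂ * Real.log (maxMod f r)} ≤ ε₁)
    (M₀ C₁ C₂ : ℝ) (hM₀ : 0 < M₀) (hC₁ : 1 < C₁) (hC₂ : 1 < C₂)
    (hgrow : ∀ r ≥ M₀, Real.log (maxMod f (C₁ * r)) ≥ C₂ * Real.log (maxMod f r)) :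
    ∃ M₁ > M₀, ∃ h > (1:ℝ), ∀ r > M₁, ∃ r' ∈ Set.Ioo r (r ^ h),
      minMod f r' > maxMod f r ^ h :=
  stmt_4_general f hf hΔ M₀ C₁ C₂ hC₁ hC₂ hgrow
end

section
/- Let f be a transcendental entire function, let A > 0 and B ≥ 1. If there exists a sequence R_j → ∞ of positive reals such that M(R_j^A, f) ≤ M(R_j, f)^B for every j, then A · ρ(f) ≤ λ(f). -/
open Filter MeasureTheory

/-!
Write `u r = log log M(r) / log r`. Taking logarithms twice in `M(R^A) ≤ M(R)^B` gives
`A · u(R^A) ≤ u(R) + log B / log R`. Along `R = R_j → ∞` the left side eventually exceeds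
any `x < A ρ` while the error term tends to `0`, so `u(R_j)` eventually exceeds any `y < x`,
and hence `λ ≥ A ρ`.
-/

section MaxModulus

variable {f : ℂ → ℂ}

theorem norm_le_maxMod_of_norm_le (hf : Differentiable ℂ f) {z : ℂ} {s : ℝ} (hs : 0 < s)
    (hz : ‖z‖ ≤ s) : ‖f z‖ ≤ maxMod f s := by
  have hbdd : BddAbove ((fun z => ‖f z‖) '' Metric.sphere (0 : ℂ) s) :=
    ((isCompact_sphere 0 s).image (continuous_norm.comp hf.continuous)).bddAbove
  refine Complex.norm_le_of_forall_mem_frontier_norm_le (U := Metric.ball 0 s)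
    Metric.isBounded_ball hf.diffContOnCl (fun w hw => le_csSup hbdd ⟨w, ?_, rfl⟩) ?_
  · rwa [frontier_ball 0 hs.ne'] at hw
  · rwa [closure_ball 0 hs.ne', mem_closedBall_zero_iff]

theorem maxMod_mono_s5 (hf : Differentiable ℂ f) {r s : ℝ} (hr : 0 ≤ r) (hrs : r ≤ s) :
    maxMod f r ≤ maxMod f s := by
  rcases hrs.eq_or_lt with rfl | hlt
  · rfl
  refine csSup_le ((NormedSpace.sphere_nonempty.mpr hr).image _) ?_
  rintro _ ⟨w, hw, rfl⟩
  exact norm_le_maxMod_of_norm_le hf (hr.trans_lt hlt)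
    ((mem_sphere_zero_iff_norm.mp hw).le.trans hrs)

theorem tendsto_maxMod_atTop (hf : Differentiable ℂ f) (hnc : ¬ ∃ c, ∀ z, f z = c) :
    Tendsto (maxMod f) atTop atTop := by
  have hunbdd : ∀ C, ∃ r ≥ 1, C < maxMod f r := by
    by_contra! ⟨C, hC⟩
    refine hnc (hf.exists_const_forall_eq_of_bounded ?_)
    refine isBounded_iff_forall_norm_le.mpr ⟨C, ?_⟩
    rintro _ ⟨z, rfl⟩
    exact (norm_le_maxMod_of_norm_le hf (by positivity) (le_max_right 1 ‖z‖)).trans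
      (hC _ (le_max_left 1 ‖z‖))
  refine tendsto_atTop_atTop.mpr fun C => ?_
  obtain ⟨r, hr1, hC⟩ := hunbdd C
  exact ⟨r, fun s hs => hC.le.trans (maxMod_mono_s5 hf (by linarith) hs)⟩

theorem TranscendentalEntire.tendsto_maxMod_atTop (hf : TranscendentalEntire f) :
    Tendsto (maxMod f) atTop atTop :=
  _root_.tendsto_maxMod_atTop hf.1 fun ⟨c, hc⟩ => hf.2 ⟨Polynomial.C c, by simpa using hc⟩

end MaxModulus

theorem EReal.mul_liminf_le_limsup_of_eventually_mul_le {u : ℝ → ℝ} {A : ℝ} (hA : 0 < A)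
    {R S c : ℕ → ℝ} (hR : Tendsto R atTop atTop) (hS : Tendsto S atTop atTop)
    (hc : Tendsto c atTop (nhds 0)) (h : ∀ᶠ j in atTop, A * u (S j) ≤ u (R j) + c j) :
    (A : EReal) * liminf (fun r => (u r : EReal)) atTop ≤
      limsup (fun r => (u r : EReal)) atTop := by
  refine EReal.ge_of_forall_gt_iff_ge.mp fun x hx => ?_
  have hxA : ((x / A : ℝ) : EReal) < liminf (fun r => (u r : EReal)) atTop := by
    rw [EReal.coe_div, EReal.div_lt_iff (by exact_mod_cast hA) (EReal.coe_ne_top A), mul_comm]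
    exact hx
  have hxS : ∀ᶠ j in atTop, x / A < u (S j) :=
    hS.eventually ((eventually_lt_of_lt_liminf hxA).mono fun r hr => by exact_mod_cast hr)
  refine EReal.ge_of_forall_gt_iff_ge.mp fun y hy => ?_
  have hyx : y < x := by exact_mod_cast hy
  have hcyx : ∀ᶠ j in atTop, c j < x - y := hc.eventually_lt_const (by linarith)
  have hyR : ∀ᶠ j in atTop, (y : EReal) ≤ u (R j) := by
    filter_upwards [h, hxS, hcyx] with j hj hxj hcj
    have : x < A * u (S j) := by rwa [div_lt_iff₀' hA] at hxj
    exact_mod_cast (by linarith : y ≤ u (R j))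
  exact le_limsup_of_frequently_le (hR.frequently hyR.frequently)

theorem mul_log_log_div_log_rpow_le {r a b A B : ℝ} (hr : 1 < r) (hA : 0 < A) (hB : 0 < B)
    (ha : 1 < a) (hb : 1 < b) (hab : a ≤ b ^ B) :
    A * (Real.log (Real.log a) / Real.log (r ^ A)) ≤
      Real.log (Real.log b) / Real.log r + Real.log B / Real.log r := by
  have hlogr : 0 < Real.log r := Real.log_pos hr
  have hloglog : Real.log (Real.log a) ≤ Real.log B + Real.log (Real.log b) :=
    calc Real.log (Real.log a) ≤ Real.log (B * Real.log b) := by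
          gcongr
          · exact Real.log_pos ha
          · rw [← Real.log_rpow (by linarith)]
            exact Real.log_le_log (by linarith) hab
      _ = Real.log B + Real.log (Real.log b) := Real.log_mul hB.ne' (Real.log_pos hb).ne'
  rw [Real.log_rpow (by linarith), ← mul_div_assoc, mul_div_mul_left _ _ hA.ne', ← add_div]
  gcongr
  linarith

theorem stmt_5_general (f : ℂ → ℂ) (hf : TranscendentalEntire f)
    (A B : ℝ) (hA : 0 < A) (hB : 1 ≤ B)
    (R : ℕ → ℝ)
    (hRtop : Filter.Tendsto R Filter.atTop Filter.atTop)
    (hM : ∀ j, maxMod f (R j ^ A) ≤ maxMod f (R j) ^ B) :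
    (A : EReal) * eLowerOrder f ≤ eOrder f := by
  have hMtop := hf.tendsto_maxMod_atTop
  have hRAtop : Tendsto (fun j => R j ^ A) atTop atTop := (tendsto_rpow_atTop hA).comp hRtop
  refine EReal.mul_liminf_le_limsup_of_eventually_mul_le hA hRtop hRAtop
    ((tendsto_const_nhds (x := Real.log B)).div_atTop (Real.tendsto_log_atTop.comp hRtop)) ?_
  filter_upwards [hRtop.eventually_gt_atTop 1, (hMtop.comp hRtop).eventually_gt_atTop 1,
    (hMtop.comp hRAtop).eventually_gt_atTop 1] with j hR hMR hMRA
  exact mul_log_log_div_log_rpow_le hR hA (by linarith) hMRA hMR (hM j)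

theorem stmt_5 (f : ℂ → ℂ) (hf : TranscendentalEntire f)
    (A B : ℝ) (hA : 0 < A) (hB : 1 ≤ B)
    (R : ℕ → ℝ) (hRpos : ∀ j, 0 < R j)
    (hRtop : Filter.Tendsto R Filter.atTop Filter.atTop)
    (hM : ∀ j, maxMod f (R j ^ A) ≤ maxMod f (R j) ^ B) :
    (A : EReal) * eLowerOrder f ≤ eOrder f :=
  stmt_5_general f hf A B hA hB R hRtop hM
end
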